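/- Let X be an S-open subset of a product ∏_{t∈T} X_t of sets, let T' be a topology on X, let x_0 ∈ X, and let (f_n)_{n≥1} be a sequence of functions f_n : (X,T') → ℝ, each strongly separately continuous at x_0, such that the series ∑_{n=1}^∞ f_n converges uniformly on X to a function f. Then f is strongly separately continuous at x_0. -/

import Mathlib

/-!
For a fixed self-map `φ`, the property `dist (g x) (g (φ x)) → 0` is preserved by finite sums
(triangle inequality) and by uniform limits (an `ε/3` argument). Strong separate continuity at
`x₀` in the `t`-th variable is this property for `φ x = x_t^{x₀}`.
-/

open Function Filter Topology

/-- `Sigma1 x` (σ₁(x)): the set of points differing from `x` in at most one coordinate. -/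
def Sigma1 {T : Type*} {X : T → Type*} (x : ∀ t, X t) : Set (∀ t, X t) :=
  {y | {t | y t ≠ x t}.Subsingleton}

/-- A set `A` is `S`-open if `σ₁(x) ⊆ A` for every `x ∈ A`. -/
def SOpen {T : Type*} {X : T → Type*} (A : Set (∀ t, X t)) : Prop :=
  ∀ x ∈ A, Sigma1 x ⊆ A

theorem update_mem {T : Type*} [DecidableEq T] {X : T → Type*} {A : Set (∀ t, X t)}
    (hA : SOpen A) {x : ∀ t, X t} (hx : x ∈ A) (t : T) (v : X t) :
    Function.update x t v ∈ A := by
  apply hA x hx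
  intro s hs s' hs'
  simp only [Set.mem_setOf_eq] at hs hs'
  have h1 : s = t := by
    by_contra h
    exact hs (Function.update_of_ne h v x)
  have h2 : s' = t := by
    by_contra h
    exact hs' (Function.update_of_ne h v x)
  rw [h1, h2]

/-- The point `x_t^v`: `x` with its `t`-th coordinate replaced by `v`, as an element
of the `S`-open set `A`. -/
def updPt {T : Type*} [DecidableEq T] {X : T → Type*} {A : Set (∀ t, X t)}
    (hA : SOpen A) (x : ↥A) (t : T) (v : X t) : ↥A :=
  ⟨Function.update x.1 t v, update_mem hA x.2 t v⟩

/-- `f : (A, T') → Y` is strongly separately continuous at `a` (w.r.t. every variable):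
for each `t`, `lim_{x → a} dist (f x) (f (x_t^a)) = 0`, the limit taken in `T'`. -/
def StrSepContAt {T : Type*} [DecidableEq T] {X : T → Type*} {A : Set (∀ t, X t)}
    (hA : SOpen A) (T' : TopologicalSpace ↥A) {Y : Type*} [MetricSpace Y]
    (f : ↥A → Y) (a : ↥A) : Prop :=
  ∀ t : T, Filter.Tendsto (fun x : ↥A => dist (f x) (f (updPt hA x t (a.1 t))))
    (@nhds _ T' a) (nhds 0)

section DistCompTendsto

variable {α β : Type*} {φ : α → α} {l : Filter α}

theorem tendsto_dist_comp_of_tendstoUniformly {ι : Type*} [PseudoMetricSpace β]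
    {p : Filter ι} {F : ι → α → β} {f : α → β} (hconv : TendstoUniformly F f p)
    (hF : ∃ᶠ n in p, Tendsto (fun x => dist (F n x) (F n (φ x))) l (𝓝 0)) :
    Tendsto (fun x => dist (f x) (f (φ x))) l (𝓝 0) := by
  refine Metric.tendsto_nhds.2 fun ε hε => ?_
  obtain ⟨n, hFn_unif, hFn⟩ :=
    ((Metric.tendstoUniformly_iff.1 hconv (ε / 3) (by positivity)).and_frequently hF).exists
  filter_upwards [Metric.tendsto_nhds.1 hFn (ε / 3) (by positivity)] with x hx
  rw [Real.dist_0_eq_abs, abs_of_nonneg dist_nonneg] at hx ⊢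
  calc dist (f x) (f (φ x))
      ≤ dist (f x) (F n x) + dist (F n x) (F n (φ x)) + dist (F n (φ x)) (f (φ x)) :=
        dist_triangle4 _ _ _ _
    _ < ε / 3 + ε / 3 + ε / 3 := by
        gcongr
        · exact hFn_unif x
        · exact dist_comm (f (φ x)) _ ▸ hFn_unif (φ x)
    _ = ε := by ring

theorem tendsto_dist_finsetSum_comp {ι : Type*} [SeminormedAddCommGroup β] (s : Finset ι)
    {F : ι → α → β} (hF : ∀ i ∈ s, Tendsto (fun x => dist (F i x) (F i (φ x))) l (𝓝 0)) :
    Tendsto (fun x => dist (∑ i ∈ s, F i x) (∑ i ∈ s, F i (φ x))) l (𝓝 0) := by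
  have hsum : Tendsto (fun x => ∑ i ∈ s, dist (F i x) (F i (φ x))) l (𝓝 0) := by
    simpa using tendsto_finsetSum s hF
  exact squeeze_zero (fun _ => dist_nonneg) (fun x => dist_sum_sum_le s _ _) hsum

end DistCompTendsto

/-- A uniformly convergent series of functions strongly separately continuous at `x₀`
has a strongly separately continuous sum at `x₀`. -/
theorem strSepContAt_of_tendstoUniformly {T : Type*} [DecidableEq T] {X : T → Type*}
    {A : Set (∀ t, X t)} (hA : SOpen A) (T' : TopologicalSpace ↥A) (x₀ : ↥A)
    (F : ℕ → ↥A → ℝ) (f : ↥A → ℝ)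
    (hF : ∀ n : ℕ, StrSepContAt hA T' (F n) x₀)
    (hconv : TendstoUniformly (fun N x => ∑ n ∈ Finset.range N, F n x) f Filter.atTop) :
    StrSepContAt hA T' f x₀ := fun t =>
  tendsto_dist_comp_of_tendstoUniformly hconv <| .of_forall fun _ =>
    tendsto_dist_finsetSum_comp _ fun n _ => hF n t
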